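/- Let X be a complex Banach space, P a continuous k-homogeneous polynomial on X with P(x) = T(x,...,x) for a continuous symmetric k-linear map T. Then ‖T‖ ≤ (k^k / k!) · ‖P‖, where ‖T‖ = sup_{‖x_1‖,...,‖x_k‖ ≤ 1} |T(x_1,...,x_k)| and ‖P‖ = sup_{‖x‖ ≤ 1} |P(x)|. -/

import Mathlib

/-
Averaging `T (fun _ => ∑ j, ε j • x j)` against the sign `∏ j, ε j` over all `ε : Fin k → {±1}`
kills every term of the multilinear expansion `∑ g, (∏ i, ε (g i)) • T (x ∘ g)` except those
indexed by permutations, so `2 ^ k * k! • T x = ∑ ε, (∏ j, ε j) • P (∑ j, ε j • x j)`.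
For unit vectors `x j`, each `∑ j, ε j • x j` has norm at most `k`, so by homogeneity
`‖P (∑ j, ε j • x j)‖ ≤ k ^ k * ‖P‖`, and the `2 ^ k` sign vectors give the bound.
-/

noncomputable def supNorm {X E : Type*} [NormedAddCommGroup X] [NormedAddCommGroup E]
    (P : X → E) : ℝ :=
  ⨆ x : {x : X // ‖x‖ ≤ 1}, ‖P x‖

open Finset

lemma Int.sum_units_pow (n : ℕ) : ∑ s : ℤˣ, (s : ℤ) ^ n = 1 + (-1) ^ n := by
  rw [show (univ : Finset ℤˣ) = {1, -1} from rfl, sum_pair (by decide)]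
  simp

lemma Int.sum_prod_units_mul_prod_comp {ι : Type*} [Fintype ι] [DecidableEq ι] (f : ι → ι) :
    ∑ ε : ι → ℤˣ, (∏ j, (ε j : ℤ)) * ∏ i, (ε (f i) : ℤ) =
      if f.Bijective then 2 ^ Fintype.card ι else 0 := by
  have hfiber (ε : ι → ℤˣ) : (∏ j, (ε j : ℤ)) * ∏ i, (ε (f i) : ℤ) =
      ∏ j, (ε j : ℤ) ^ (Fintype.card {i // f i = j} + 1) := by
    simp_rw [← Fintype.prod_fiberwise' f (fun j => (ε j : ℤ)), prod_const, ← prod_mul_distrib,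
      pow_succ', card_univ]
  simp_rw [hfiber,
    ← Fintype.prod_sum (fun j (s : ℤˣ) => (s : ℤ) ^ (Fintype.card {i // f i = j} + 1)),
    Int.sum_units_pow]
  split_ifs with hf
  · have hcard (j : ι) : Fintype.card {i // f i = j} = 1 :=
      Fintype.card_eq_one_iff.2 (by
        obtain ⟨i, hi, huniq⟩ := hf.existsUnique j
        exact ⟨⟨i, hi⟩, fun ⟨i', hi'⟩ => Subtype.ext (huniq i' hi')⟩)
    simp [hcard]
  · obtain ⟨j, hj⟩ : ∃ j, ∀ i, f i ≠ j := by
      simpa [Function.Surjective] using mt Finite.surjective_iff_bijective.1 hf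
    refine prod_eq_zero (mem_univ j) ?_
    rw [Fintype.card_eq_zero_iff.2 ⟨fun i => hj i.1 i.2⟩]
    norm_num

namespace MultilinearMap
variable {R ι M N : Type*} [CommRing R] [AddCommGroup M] [Module R M] [AddCommGroup N]
  [Module R N] [Fintype ι]

lemma map_units_smul_univ (f : MultilinearMap R (fun _ : ι => M) N) (c : ι → ℤˣ) (m : ι → M) :
    f (fun i => c i • m i) = (∏ i, c i) • f m := by
  simpa [Units.smul_def] using (f.restrictScalars ℤ).map_smul_univ (fun i => (c i : ℤ)) m

variable [DecidableEq ι]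

theorem sum_units_smul_map_diag_sum (f : MultilinearMap R (fun _ : ι => M) N)
    (hf : ∀ (σ : Equiv.Perm ι) (v : ι → M), f (v ∘ σ) = f v) (x : ι → M) :
    ∑ ε : ι → ℤˣ, (∏ j, ε j) • f (fun _ => ∑ j, ε j • x j) =
      (2 ^ Fintype.card ι * (Fintype.card ι).factorial) • f x := by
  have hexpand (ε : ι → ℤˣ) : f (fun _ => ∑ j, ε j • x j) =
      ∑ g : ι → ι, (∏ i, ε (g i)) • f (x ∘ g) := by
    rw [f.map_sum (fun _ j => ε j • x j)]
    simp_rw [f.map_units_smul_univ]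
    rfl
  calc ∑ ε : ι → ℤˣ, (∏ j, ε j) • f (fun _ => ∑ j, ε j • x j)
      = ∑ g : ι → ι, (∑ ε : ι → ℤˣ, (∏ j, (ε j : ℤ)) * ∏ i, (ε (g i) : ℤ)) • f (x ∘ g) := by
        simp_rw [hexpand, smul_sum, sum_smul, Units.smul_def, smul_smul]
        rw [sum_comm]
        push_cast
        rfl
    _ = ∑ σ : Equiv.Perm ι, (2 ^ Fintype.card ι : ℤ) • f x := by
        simp_rw [Int.sum_prod_units_mul_prod_comp]
        refine (Fintype.sum_of_injective _ DFunLike.coe_injective _ _ ?_ ?_).symm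
        · intro g hg
          rw [if_neg fun hbij => hg ⟨Equiv.ofBijective g hbij, rfl⟩, zero_smul]
        · intro σ
          simp [hf]
    _ = (2 ^ Fintype.card ι * (Fintype.card ι).factorial) • f x := by
        rw [sum_const, card_univ, Fintype.card_perm, ← natCast_zsmul, smul_smul, ← natCast_zsmul]
        push_cast
        ring_nf

end MultilinearMap

namespace ContinuousMultilinearMap
variable {𝕜 ι G : Type*} [RCLike 𝕜] [Fintype ι] [NormedAddCommGroup G] [NormedSpace 𝕜 G]

lemma norm_map_eq_prod_norm_mul_norm_map_inv_norm_smul {E : ι → Type*}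
    [∀ i, NormedAddCommGroup (E i)] [∀ i, NormedSpace 𝕜 (E i)]
    (f : ContinuousMultilinearMap 𝕜 E G) {m : ∀ i, E i} (hm : ∀ i, m i ≠ 0) :
    ‖f m‖ = (∏ i, ‖m i‖) * ‖f (fun i => (‖m i‖⁻¹ : 𝕜) • m i)‖ := by
  rw [f.map_smul_univ, norm_smul, norm_prod, ← mul_assoc, ← prod_mul_distrib,
    prod_eq_one fun i _ => ?_, one_mul]
  rw [norm_inv, RCLike.norm_ofReal, abs_norm, mul_inv_cancel₀ (norm_ne_zero_iff.2 (hm i))]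

lemma opNorm_le_of_forall_norm_eq_one {E : ι → Type*}
    [∀ i, NormedAddCommGroup (E i)] [∀ i, NormedSpace 𝕜 (E i)]
    (f : ContinuousMultilinearMap 𝕜 E G) {C : ℝ} (hC : 0 ≤ C)
    (h : ∀ m, (∀ i, ‖m i‖ = 1) → ‖f m‖ ≤ C) : ‖f‖ ≤ C := by
  refine opNorm_le_bound hC fun m => ?_
  by_cases hm : ∃ i, m i = 0
  · obtain ⟨i, hi⟩ := hm
    rw [f.map_coord_zero i hi, norm_zero]
    positivity
  push Not at hm
  rw [f.norm_map_eq_prod_norm_mul_norm_map_inv_norm_smul hm, mul_comm]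
  gcongr
  exact h _ fun i => norm_smul_inv_norm (hm i)

variable {E : Type*} [NormedAddCommGroup E] [NormedSpace 𝕜 E]

lemma norm_map_diag_le_of_forall_norm_le_one (f : ContinuousMultilinearMap 𝕜 (fun _ : ι => E) G)
    {C : ℝ} (h : ∀ x, ‖x‖ ≤ 1 → ‖f (fun _ => x)‖ ≤ C) (x : E) :
    ‖f (fun _ => x)‖ ≤ C * ‖x‖ ^ Fintype.card ι := by
  rcases eq_or_ne x 0 with rfl | hx
  · cases isEmpty_or_nonempty ι
    · simpa using h 0 (by simp)
    · obtain ⟨i⟩ := ‹Nonempty ι›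
      simp [f.map_coord_zero (m := fun _ => (0 : E)) i rfl]
  rw [f.norm_map_eq_prod_norm_mul_norm_map_inv_norm_smul fun _ => hx, prod_const, card_univ,
    mul_comm]
  gcongr
  exact h _ (norm_smul_inv_norm hx).le

lemma norm_map_diag_le_supNorm (f : ContinuousMultilinearMap 𝕜 (fun _ : ι => E) G) {x : E}
    (hx : ‖x‖ ≤ 1) : ‖f (fun _ => x)‖ ≤ supNorm fun x : E => f fun _ => x := by
  refine le_ciSup (f := fun x : {x : E // ‖x‖ ≤ 1} => ‖f fun _ => x.1‖) ⟨‖f‖, ?_⟩ ⟨x, hx⟩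
  rintro _ ⟨y, rfl⟩
  exact f.unit_le_opNorm ((pi_norm_le_iff_of_nonneg zero_le_one).2 fun _ => y.2)

variable [DecidableEq ι]

lemma norm_le_of_norm_map_diag_le (f : ContinuousMultilinearMap 𝕜 (fun _ : ι => E) G)
    (hf : ∀ (σ : Equiv.Perm ι) (v : ι → E), f (v ∘ σ) = f v) {C : ℝ} (hC : 0 ≤ C)
    (hdiag : ∀ x, ‖f (fun _ => x)‖ ≤ C * ‖x‖ ^ Fintype.card ι) {m : ι → E}
    (hm : ∀ i, ‖m i‖ ≤ 1) :
    ‖f m‖ ≤ (Fintype.card ι : ℝ) ^ Fintype.card ι / (Fintype.card ι).factorial * C := by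
  set n := Fintype.card ι
  have hsum (ε : ι → ℤˣ) : ‖∑ j, ε j • m j‖ ≤ n := calc
    ‖∑ j, ε j • m j‖ ≤ ∑ j, ‖ε j • m j‖ := norm_sum_le _ _
    _ ≤ ∑ _j : ι, (1 : ℝ) := sum_le_sum fun j _ => (norm_units_zsmul _ _).trans_le (hm j)
    _ = n := by simp [n]
  have key : (2 ^ n * (n.factorial * ‖f m‖) : ℝ) ≤ 2 ^ n * (n ^ n * C) := calc
    (2 ^ n * (n.factorial * ‖f m‖) : ℝ) = ‖(2 ^ n * n.factorial) • f m‖ := by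
        rw [← Nat.cast_smul_eq_nsmul 𝕜, norm_smul, RCLike.norm_natCast]
        push_cast
        ring
    _ = ‖∑ ε : ι → ℤˣ, (∏ j, ε j) • f (fun _ => ∑ j, ε j • m j)‖ :=
        congrArg _ (f.toMultilinearMap.sum_units_smul_map_diag_sum hf m).symm
    _ ≤ ∑ ε : ι → ℤˣ, ‖f (fun _ => ∑ j, ε j • m j)‖ :=
        (norm_sum_le _ _).trans_eq (sum_congr rfl fun _ _ => norm_units_zsmul _ _)
    _ ≤ ∑ _ε : ι → ℤˣ, n ^ n * C := sum_le_sum fun ε _ => calc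
        ‖f (fun _ => ∑ j, ε j • m j)‖ ≤ C * ‖∑ j, ε j • m j‖ ^ n := hdiag _
        _ ≤ C * n ^ n := by gcongr; exact hsum ε
        _ = n ^ n * C := mul_comm _ _
    _ = 2 ^ n * (n ^ n * C) := by simp [n, Fintype.card_units_int]
  rw [div_mul_eq_mul_div, le_div_iff₀ (by positivity), mul_comm]
  exact le_of_mul_le_mul_left key (by positivity)

end ContinuousMultilinearMap

theorem polarization_inequality_general {X : Type*} [NormedAddCommGroup X] [NormedSpace ℂ X]
    (k : ℕ)
    (T : ContinuousMultilinearMap ℂ (fun _ : Fin k => X) ℂ)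
    (hsym : ∀ (σ : Equiv.Perm (Fin k)) (v : Fin k → X), T (v ∘ σ) = T v)
    (P : X → ℂ) (hP : ∀ x, P x = T (fun _ => x)) :
    ‖T‖ ≤ ((k : ℝ) ^ k / (Nat.factorial k : ℝ)) * supNorm P := by
  obtain rfl : P = fun x => T fun _ => x := funext hP
  have hS : 0 ≤ supNorm fun x : X => T fun _ => x := Real.iSup_nonneg fun _ => norm_nonneg _
  have hdiag := T.norm_map_diag_le_of_forall_norm_le_one fun _ hx => T.norm_map_diag_le_supNorm hx
  refine T.opNorm_le_of_forall_norm_eq_one (by positivity) fun m hm => ?_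
  simpa using T.norm_le_of_norm_map_diag_le hsym hS hdiag fun i => (hm i).le

/-- Polarization inequality: for a continuous symmetric `k`-linear map `T` on a
complex Banach space with associated homogeneous polynomial `P`,
`‖T‖ ≤ (k^k / k!) ‖P‖`. -/
theorem polarization_inequality {X : Type*} [NormedAddCommGroup X] [NormedSpace ℂ X]
    [CompleteSpace X] (k : ℕ)
    (T : ContinuousMultilinearMap ℂ (fun _ : Fin k => X) ℂ)
    (hsym : ∀ (σ : Equiv.Perm (Fin k)) (v : Fin k → X), T (v ∘ σ) = T v)
    (P : X → ℂ) (hP : ∀ x, P x = T (fun _ => x)) :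
    ‖T‖ ≤ ((k : ℝ) ^ k / (Nat.factorial k : ℝ)) * supNorm P :=
  polarization_inequality_general k T hsym P hP
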